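/- For the Takagi function T and f = −T, at every dyadic rational x ∈ [0,1] the subdifferential ∂f(x) is empty. -/

import Mathlib

open Filter Topology

/-- Distance from `t` to the nearest integer. -/
noncomputable def nearestIntDist (t : ℝ) : ℝ := |t - round t|

/-- The (viscosity/Fréchet) subdifferential of `f : ℝ → ℝ`, relative to the domain `s`,
at the point `x`. -/
def subdifferentialWithin (f : ℝ → ℝ) (s : Set ℝ) (x : ℝ) : Set ℝ :=
  {c | ∀ ε > (0 : ℝ), ∀ᶠ h in 𝓝[≠] (0 : ℝ), x + h ∈ s → -ε ≤ (f (x + h) - f x - c * h) / |h|}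

lemma nid_nonneg (t : ℝ) : 0 ≤ nearestIntDist t := abs_nonneg _

lemma nid_le_half (t : ℝ) : nearestIntDist t ≤ 1 / 2 := abs_sub_round t

lemma nid_int (k : ℤ) : nearestIntDist (k : ℝ) = 0 := by
  simp [nearestIntDist, round_intCast]

lemma nid_lipschitz (a b : ℝ) : |nearestIntDist a - nearestIntDist b| ≤ |a - b| := by
  have key : ∀ u v : ℝ, nearestIntDist u - nearestIntDist v ≤ |u - v| := by
    intro u v
    have h1 : nearestIntDist u ≤ |u - (round v : ℤ)| := round_le u (round v)
    have h2 : |u - (round v : ℤ)| ≤ |u - v| + |v - round v| := by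
      calc |u - (round v : ℤ)| = |(u - v) + (v - round v)| := by ring_nf
        _ ≤ |u - v| + |v - round v| := abs_add_le _ _
    have := h1.trans h2
    simpa [nearestIntDist] using this
  rw [abs_sub_le_iff]
  exact ⟨key a b, by simpa [abs_sub_comm] using key b a⟩

lemma round_half : round ((1:ℝ)/2) = 1 := by
  rw [round_eq]
  norm_num

lemma nid_small {s : ℝ} (h0 : 0 < s) (h1 : s ≤ 1 / 2) :
    nearestIntDist s = s ∧ nearestIntDist (-s) = s := by
  constructor
  · rcases lt_or_eq_of_le h1 with h | h
    · have hr : round s = 0 := by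
        rw [round_eq]
        exact Int.floor_eq_zero_iff.mpr ⟨by linarith, by linarith⟩
      rw [nearestIntDist, hr]
      push_cast
      rw [sub_zero, abs_of_pos h0]
    · subst h
      rw [nearestIntDist, round_half]
      norm_num
  · have hr : round (-s) = 0 := by
      rw [round_eq]
      exact Int.floor_eq_zero_iff.mpr ⟨by linarith, by linarith⟩
    rw [nearestIntDist, hr]
    push_cast
    rw [sub_zero, abs_neg, abs_of_pos h0]

lemma takagi_summable (z : ℝ) :
    Summable (fun j : ℕ => nearestIntDist ((2:ℝ) ^ j * z) / 2 ^ j) := by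
  refine Summable.of_nonneg_of_le
    (fun j => div_nonneg (nid_nonneg _) (by positivity))
    (fun j => ?_)
    (summable_geometric_of_lt_one (by norm_num : (0:ℝ) ≤ 1/2) (by norm_num))
  rw [div_le_iff₀ (by positivity)]
  calc nearestIntDist ((2:ℝ)^j * z) ≤ 1/2 := nid_le_half _
    _ ≤ 1 := by norm_num
    _ = (1/2:ℝ)^j * 2^j := by rw [← mul_pow]; norm_num
    _ ≤ (1/2:ℝ)^j * 2^j := le_refl _

lemma takagi_key (k n m : ℕ) (hnm : n ≤ m) (e : ℝ) (he : e = 1 ∨ e = -1) :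
    ((m:ℝ) - 2*n) / 2 ^ m + (∑' j : ℕ, nearestIntDist ((2:ℝ) ^ j * ((k:ℝ)/2^n)) / 2 ^ j)
      ≤ ∑' j : ℕ, nearestIntDist ((2:ℝ) ^ j * ((k:ℝ)/2^n + e / 2 ^ m)) / 2 ^ j := by
  set x : ℝ := (k:ℝ)/2^n with hxdef
  set h : ℝ := e / 2^m with hhdef
  have heabs : |e| = 1 := by rcases he with rfl | rfl <;> norm_num
  have hint : ∀ j, n ≤ j → ∃ K : ℤ, (2:ℝ)^j * x = K := by
    intro j hj
    refine ⟨(k : ℤ) * 2 ^ (j - n), ?_⟩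
    have hp : (2:ℝ)^j = 2^(j-n) * 2^n := by rw [← pow_add]; congr 1; omega
    push_cast
    rw [hxdef, hp]
    field_simp
  have hTx : (∑' j : ℕ, nearestIntDist ((2:ℝ) ^ j * x) / 2 ^ j)
      = ∑ j ∈ Finset.range n, nearestIntDist ((2:ℝ) ^ j * x) / 2 ^ j := by
    apply tsum_eq_sum
    intro j hj
    rw [Finset.mem_range, not_lt] at hj
    obtain ⟨K, hK⟩ := hint j hj
    rw [hK, nid_int]
    simp
  have hTxh : ∑ j ∈ Finset.range m, nearestIntDist ((2:ℝ) ^ j * (x + h)) / 2 ^ j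
      ≤ ∑' j : ℕ, nearestIntDist ((2:ℝ) ^ j * (x + h)) / 2 ^ j :=
    Summable.sum_le_tsum _ (fun j _ => div_nonneg (nid_nonneg _) (by positivity)) (takagi_summable _)
  have hmid : ∀ j ∈ Finset.Ico n m,
      nearestIntDist ((2:ℝ) ^ j * (x + h)) / 2 ^ j = 1 / 2 ^ m := by
    intro j hjmem
    rw [Finset.mem_Ico] at hjmem
    obtain ⟨hj, hjm⟩ := hjmem
    obtain ⟨K, hK⟩ := hint j hj
    have hpow : (2:ℝ)^j * 2^(m-j) = 2^m := by rw [← pow_add]; congr 1; omega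
    have hp : ((1:ℝ)/2)^(m-j) = 2^j / 2^m := by
      rw [div_pow, one_pow, div_eq_div_iff (by positivity) (by positivity), one_mul]
      exact hpow.symm
    have hsval : (2:ℝ)^j * h = e * (1/2 : ℝ)^(m - j) := by
      rw [hp, hhdef]; ring
    have hs0 : (0:ℝ) < (1/2:ℝ)^(m-j) := by positivity
    have hs1 : ((1:ℝ)/2)^(m-j) ≤ 1/2 := by
      calc ((1:ℝ)/2)^(m-j) ≤ (1/2:ℝ)^1 :=
            pow_le_pow_of_le_one (by norm_num) (by norm_num) (by omega)
        _ = 1/2 := pow_one _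
    have hnid : nearestIntDist ((2:ℝ)^j * (x+h)) = (1/2:ℝ)^(m-j) := by
      have expand : (2:ℝ)^j * (x+h) = e * (1/2:ℝ)^(m-j) + (K:ℝ) := by
        rw [mul_add, hK, hsval]; ring
      rw [expand]
      have hn := nid_small hs0 hs1
      rcases he with rfl | rfl
      · rw [show (1:ℝ) * (1/2:ℝ)^(m-j) + (K:ℝ) = (1/2:ℝ)^(m-j) + ((K:ℤ):ℝ) by push_cast; ring,
          nearestIntDist, round_add_intCast]
        push_cast
        rw [show ((1:ℝ)/2)^(m-j) + (K:ℝ) - ((round ((1/2:ℝ)^(m-j)) : ℤ) + (K:ℝ)) =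
          (1/2:ℝ)^(m-j) - round ((1/2:ℝ)^(m-j)) by ring]
        exact hn.1
      · rw [show (-1:ℝ) * (1/2:ℝ)^(m-j) + (K:ℝ) = -((1/2:ℝ)^(m-j)) + ((K:ℤ):ℝ) by push_cast; ring,
          nearestIntDist, round_add_intCast]
        push_cast
        rw [show -((1:ℝ)/2)^(m-j) + (K:ℝ) - ((round (-(1/2:ℝ)^(m-j)) : ℤ) + (K:ℝ)) =
          -((1/2:ℝ)^(m-j)) - round (-(1/2:ℝ)^(m-j)) by ring]
        exact hn.2
    rw [hnid, hp]
    rw [div_div, div_eq_div_iff (by positivity) (by positivity), one_mul, mul_comm ((2:ℝ)^m)]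
  have hlow : ∀ j ∈ Finset.range n,
      nearestIntDist ((2:ℝ) ^ j * x) / 2 ^ j - 1 / 2 ^ m
        ≤ nearestIntDist ((2:ℝ) ^ j * (x + h)) / 2 ^ j := by
    intro j _
    have h2j : (0:ℝ) < 2^j := by positivity
    have h2m : (0:ℝ) < 2^m := by positivity
    have habs : |(2:ℝ)^j * (x+h) - (2:ℝ)^j * x| = (2:ℝ)^j / 2^m := by
      calc |(2:ℝ)^j * (x+h) - (2:ℝ)^j * x| = (2:ℝ)^j * |h| := by
            rw [show (2:ℝ)^j * (x+h) - (2:ℝ)^j * x = (2:ℝ)^j * h by ring, abs_mul,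
              abs_of_pos h2j]
        _ = (2:ℝ)^j / 2^m := by
            rw [hhdef, abs_div, heabs, abs_of_pos h2m]; ring
    have lip := nid_lipschitz ((2:ℝ)^j * (x+h)) ((2:ℝ)^j * x)
    rw [habs, abs_le] at lip
    have h1 : nearestIntDist ((2:ℝ)^j*x) - 2^j/2^m ≤ nearestIntDist ((2:ℝ)^j*(x+h)) := by
      linarith [lip.1]
    have h3 : ((2:ℝ)^j / 2^m) / 2^j = 1/2^m := by
      rw [div_div, mul_comm, ← div_div, div_self (ne_of_gt h2j)]
    have heq : nearestIntDist ((2:ℝ)^j*x)/2^j - 1/2^m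
        = (nearestIntDist ((2:ℝ)^j*x) - 2^j/2^m)/2^j := by
      rw [sub_div, h3]
    rw [heq]
    gcongr
  -- combine
  have hsplit : ∑ j ∈ Finset.range m, nearestIntDist ((2:ℝ) ^ j * (x + h)) / 2 ^ j
      = ∑ j ∈ Finset.range n, nearestIntDist ((2:ℝ) ^ j * (x + h)) / 2 ^ j
        + ∑ j ∈ Finset.Ico n m, nearestIntDist ((2:ℝ) ^ j * (x + h)) / 2 ^ j := by
    rw [Finset.range_eq_Ico,
      ← Finset.sum_Ico_consecutive _ (Nat.zero_le n) hnm, Finset.range_eq_Ico]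
  have hmidsum : ∑ j ∈ Finset.Ico n m, nearestIntDist ((2:ℝ) ^ j * (x + h)) / 2 ^ j
      = ((m:ℝ) - n) / 2 ^ m := by
    rw [Finset.sum_congr rfl hmid, Finset.sum_const, Nat.card_Ico, nsmul_eq_mul]
    rw [Nat.cast_sub hnm]
    ring
  have hlowsum : ∑ j ∈ Finset.range n, nearestIntDist ((2:ℝ) ^ j * x) / 2 ^ j - (n:ℝ)/2^m
      ≤ ∑ j ∈ Finset.range n, nearestIntDist ((2:ℝ) ^ j * (x + h)) / 2 ^ j := by
    have := Finset.sum_le_sum hlow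
    rw [Finset.sum_sub_distrib, Finset.sum_const, nsmul_eq_mul] at this
    calc _ = ∑ j ∈ Finset.range n, nearestIntDist ((2:ℝ) ^ j * x) / 2 ^ j
          - (Finset.range n).card • ((1:ℝ)/2^m) := by
          rw [Finset.card_range, nsmul_eq_mul]; ring
      _ ≤ _ := by
          rw [nsmul_eq_mul, Finset.card_range]
          calc ∑ j ∈ Finset.range n, nearestIntDist ((2:ℝ) ^ j * x) / 2 ^ j - (n:ℝ)*(1/2^m)
              = ∑ j ∈ Finset.range n,
                  (nearestIntDist ((2:ℝ) ^ j * x) / 2 ^ j - 1/2^m) := by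
                rw [Finset.sum_sub_distrib, Finset.sum_const, Finset.card_range, nsmul_eq_mul]
            _ ≤ _ := Finset.sum_le_sum hlow
  rw [hTx]
  calc ((m:ℝ) - 2*n) / 2 ^ m + ∑ j ∈ Finset.range n, nearestIntDist ((2:ℝ) ^ j * x) / 2 ^ j
      = (∑ j ∈ Finset.range n, nearestIntDist ((2:ℝ) ^ j * x) / 2 ^ j - (n:ℝ)/2^m)
        + ((m:ℝ) - n)/2^m := by ring
    _ ≤ ∑ j ∈ Finset.range n, nearestIntDist ((2:ℝ) ^ j * (x + h)) / 2 ^ j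
        + ((m:ℝ) - n)/2^m := by linarith [hlowsum]
    _ = ∑ j ∈ Finset.range m, nearestIntDist ((2:ℝ) ^ j * (x + h)) / 2 ^ j := by
        rw [hsplit, hmidsum]
    _ ≤ _ := hTxh

theorem stmt18 (x : ℝ) (hx : x ∈ Set.Icc (0 : ℝ) 1)
    (hdyadic : ∃ k n : ℕ, x = (k : ℝ) / 2 ^ n) :
    subdifferentialWithin
      (fun z => -(∑' n : ℕ, nearestIntDist ((2 : ℝ) ^ n * z) / 2 ^ n))
      (Set.Icc 0 1) x = ∅ := by
  obtain ⟨k, n, hxkn⟩ := hdyadic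
  ext c
  simp only [Set.mem_empty_iff_false, iff_false]
  intro hc
  have h1 := hc 1 one_pos
  rw [Filter.Eventually] at h1
  obtain ⟨δ, hδ, hsub⟩ := Metric.mem_nhdsWithin_iff.mp h1
  obtain ⟨N, hN⟩ := exists_pow_lt_of_lt_one hδ (by norm_num : (1:ℝ)/2 < 1)
  set m : ℕ := max N (2*n + (⌈|c|⌉₊ + 2)) with hmdef
  have hmN : N ≤ m := le_max_left _ _
  have hm2n : 2*n + (⌈|c|⌉₊ + 2) ≤ m := le_max_right _ _
  have hnm : n ≤ m := by omega
  have hmc : (2:ℝ)*n + |c| + 2 ≤ (m:ℝ) := by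
    have h1' : (|c| : ℝ) ≤ (⌈|c|⌉₊ : ℝ) := Nat.le_ceil _
    have h2' : ((2*n + (⌈|c|⌉₊ + 2) : ℕ) : ℝ) ≤ (m:ℝ) := by exact_mod_cast hm2n
    push_cast at h2'
    linarith
  have h2mpos : (0:ℝ) < 2 ^ m := by positivity
  have hApos : (0:ℝ) < 1 / 2 ^ m := by positivity
  have hAδ : (1:ℝ) / 2 ^ m < δ := by
    calc (1:ℝ)/2^m = (1/2:ℝ)^m := by rw [div_pow, one_pow]
      _ ≤ (1/2:ℝ)^N := pow_le_pow_of_le_one (by norm_num) (by norm_num) hmN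
      _ < δ := hN
  -- choose direction
  have hx1 : x ≤ 1 := hx.2
  have main : ∀ e : ℝ, (e = 1 ∨ e = -1) → x + e/2^m ∈ Set.Icc (0:ℝ) 1 → False := by
    intro e he hmem
    set h : ℝ := e / 2^m with hhdef
    have heabs : |e| = 1 := by rcases he with rfl | rfl <;> norm_num
    have hhabs : |h| = 1/2^m := by
      rw [hhdef, abs_div, heabs, abs_of_pos h2mpos]
    have hhne : h ≠ 0 := by
      intro h0
      rw [h0, abs_zero] at hhabs
      linarith
    have hball : h ∈ Metric.ball (0:ℝ) δ ∩ {(0:ℝ)}ᶜ := by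
      constructor
      · rw [Metric.mem_ball, Real.dist_eq, sub_zero, hhabs]
        exact hAδ
      · exact hhne
    have hP := hsub hball hmem
    -- key estimate
    have hkey := takagi_key k n m hnm e he
    rw [← hxkn] at hkey
    set T : ℝ → ℝ := fun z => ∑' j : ℕ, nearestIntDist ((2:ℝ) ^ j * z) / 2 ^ j with hT
    set A : ℝ := 1 / 2^m with hAdef
    have hkey' : ((m:ℝ) - 2*n) * A + T x ≤ T (x + h) := by
      have : ((m:ℝ) - 2*n) / 2^m = ((m:ℝ) - 2*n) * A := by rw [hAdef]; ring
      linarith [hkey, this.ge, this.le]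
    have hP' : -1 ≤ (-(T (x + h)) - -(T x) - c * h) / |h| := hP
    rw [hhabs, le_div_iff₀ hApos] at hP'
    have hch : -(c * h) ≤ |c| * A := by
      calc -(c*h) ≤ |c*h| := neg_le_abs _
        _ = |c| * |h| := abs_mul _ _
        _ = |c| * A := by rw [hhabs]
    have hint2 : (0:ℝ) ≤ ((m:ℝ) - 2*n - |c| - 2) * A :=
      mul_nonneg (by linarith [hmc]) hApos.le
    nlinarith [hkey', hP', hch, hint2, hApos]
  rcases lt_or_eq_of_le hx1 with hxlt | hxeq
  · -- x < 1 : go right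
    apply main 1 (Or.inl rfl)
    constructor
    · have := hx.1
      have : (0:ℝ) ≤ x + 1/2^m := by positivity
      simpa using this
    · -- x + 1/2^m ≤ 1
      have hkn : k < 2^n := by
        by_contra hge
        push_neg at hge
        have : (1:ℝ) ≤ x := by
          rw [hxkn, le_div_iff₀ (by positivity)]
          calc (1:ℝ) * 2^n = 2^n := one_mul _
            _ = ((2^n : ℕ) : ℝ) := by push_cast; ring
            _ ≤ (k:ℝ) := by exact_mod_cast hge
        linarith
      have hxle : x ≤ 1 - 1/2^n := by
        rw [hxkn]
        have h2n : (0:ℝ) < 2^n := by positivity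
        rw [div_le_iff₀ h2n]
        have : (k:ℝ) ≤ (2:ℝ)^n - 1 := by
          have : ((k:ℕ):ℝ) ≤ ((2^n - 1 : ℕ):ℝ) := by exact_mod_cast Nat.le_pred_of_lt hkn
          push_cast [Nat.cast_sub (Nat.one_le_two_pow)] at this
          convert this using 2 <;> push_cast <;> ring
        calc (k:ℝ) ≤ (2:ℝ)^n - 1 := this
          _ ≤ ((1:ℝ) - 1/2^n) * 2^n := by field_simp; exact le_rfl
      have h2nm : (1:ℝ)/2^m ≤ 1/2^n := by
        apply div_le_div_of_nonneg_left (by norm_num) (by positivity)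
        exact pow_le_pow_right₀ (by norm_num) hnm
      simp only [one_div] at *
      calc x + ((2:ℝ)^m)⁻¹ ≤ (1 - ((2:ℝ)^n)⁻¹) + ((2:ℝ)^n)⁻¹ := by
            apply add_le_add hxle h2nm
        _ = 1 := by ring
  · -- x = 1 : go left
    apply main (-1) (Or.inr rfl)
    rw [hxeq]
    have h2 : (1:ℝ)/2^m ≤ 1 := by
      rw [div_le_one h2mpos]
      exact one_le_pow₀ (by norm_num)
    constructor
    · have : (1:ℝ) + -1/2^m = 1 - 1/2^m := by ring
      rw [this]
      linarith
    · have : (1:ℝ) + -1/2^m = 1 - 1/2^m := by ring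
      rw [this]
      linarith [hApos]
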